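/- arXiv:math/0412535 — 3 statements merged into one kernel-verified Lean document; each statement's English description precedes it below -/
import Mathlib

section
/- Let P ⊆ ℝ^d be the convex hull of a finite subset of ℤ^d, and suppose P = {x ∈ ℝ^d : aᵢᵀx ≥ bᵢ, i = 1,…,n} where each inequality is facet-defining, i.e. the affine span of P ∩ {x : aᵢᵀx = bᵢ} has dimension d − 1. Suppose that for each i there is at most one nonzero real number m such that {x ∈ ℤ^d : aᵢᵀx = bᵢ + m} ∩ P is nonempty. Then there exists an affine map π : ℝ^d → ℝ^n that is injective on P, maps every point of P ∩ ℤ^d into {0,1}^n, and satisfies π(P) = [0,1]^n ∩ affineSpan_ℝ(π(P)). (Implication (2) ⇒ (3) of the paper's main Theorem 2.4.) -/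
noncomputable section

/-- The dot product `aᵀx = ∑ i, a i * x i` on `ℝ^d`. -/
def dot {d : ℕ} (a x : Fin d → ℝ) : ℝ := ∑ i, a i * x i

/-- The set of integer points `ℤ^d ⊆ ℝ^d`. -/
def intPoints (d : ℕ) : Set (Fin d → ℝ) := {x | ∀ i, ∃ z : ℤ, x i = (z : ℝ)}

/-- The unit hypercube `[0,1]^n ⊆ ℝ^n`. -/
def stdCube (n : ℕ) : Set (Fin n → ℝ) := {x | ∀ i, x i ∈ Set.Icc (0 : ℝ) 1}

/-- The set of `0/1` points `{0,1}^n ⊆ ℝ^n`. -/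
def zeroOneSet (n : ℕ) : Set (Fin n → ℝ) := {x | ∀ i, x i = 0 ∨ x i = 1}

lemma dot_add' {d : ℕ} (a x y : Fin d → ℝ) : dot a (x + y) = dot a x + dot a y := by
  simp [dot, mul_add, Finset.sum_add_distrib]

lemma dot_smul' {d : ℕ} (a : Fin d → ℝ) (c : ℝ) (x : Fin d → ℝ) :
    dot a (c • x) = c * dot a x := by
  simp only [dot, Pi.smul_apply, smul_eq_mul, Finset.mul_sum]
  exact Finset.sum_congr rfl fun j _ => by ring

/-- `dot a` as a linear map. -/
def dotLin {d : ℕ} (a : Fin d → ℝ) : (Fin d → ℝ) →ₗ[ℝ] ℝ where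
  toFun x := dot a x
  map_add' x y := dot_add' a x y
  map_smul' c x := dot_smul' a c x

/-- Implication (2) ⇒ (3) of the main theorem: if a lattice polytope `P` with
irredundant (facet-defining) linear description `aᵢᵀx ≥ bᵢ`, `i = 1,…,n`, has at most one
nonzero level `m` in each facet direction containing lattice points of `P`, then there is an
affine map `π : ℝ^d → ℝ^n`, injective on `P`, sending `P ∩ ℤ^d` into `{0,1}^n`, with
`π(P) = [0,1]^n ∩ affineSpan ℝ (π(P))`. -/
theorem compressed_main_two_implies_three
    (d n : ℕ) (A : Finset (Fin d → ℝ)) (hA : (A : Set (Fin d → ℝ)) ⊆ intPoints d)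
    (P : Set (Fin d → ℝ)) (hP : P = convexHull ℝ (A : Set (Fin d → ℝ)))
    (a : Fin n → Fin d → ℝ) (b : Fin n → ℝ)
    (hdesc : P = {x | ∀ i, b i ≤ dot (a i) x})
    (hfacet : ∀ i,
      Module.finrank ℝ ((affineSpan ℝ (P ∩ {x | dot (a i) x = b i})).direction) = d - 1)
    (htwo : ∀ i, ∀ m m' : ℝ, m ≠ 0 → m' ≠ 0 →
      ({x ∈ intPoints d | dot (a i) x = b i + m} ∩ P).Nonempty →
      ({x ∈ intPoints d | dot (a i) x = b i + m'} ∩ P).Nonempty → m = m') :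
    ∃ π : (Fin d → ℝ) →ᵃ[ℝ] (Fin n → ℝ),
      Set.InjOn π P ∧
      (∀ x ∈ P ∩ intPoints d, π x ∈ zeroOneSet n) ∧
      π '' P = stdCube n ∩ (affineSpan ℝ (π '' P) : Set (Fin n → ℝ)) := by
  classical
  -- points of P satisfy the inequalities
  have hPle : ∀ x ∈ P, ∀ i, b i ≤ dot (a i) x := by
    intro x hx i
    rw [hdesc] at hx
    exact hx i
  -- the "exists a nonzero level" predicate
  set Q : Fin n → Prop :=
    fun i => ∃ c : ℝ, c ≠ 0 ∧ ({x ∈ intPoints d | dot (a i) x = b i + c} ∩ P).Nonempty with hQdef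
  set m : Fin n → ℝ := fun i => if h : Q i then h.choose else 1 with hmdef
  have hm_spec : ∀ i (h : Q i), m i ≠ 0 ∧
      ({x ∈ intPoints d | dot (a i) x = b i + m i} ∩ P).Nonempty := by
    intro i h
    have : m i = h.choose := by simp [hmdef, dif_pos h]
    rw [this]
    exact h.choose_spec
  have hm_ne : ∀ i, m i ≠ 0 := by
    intro i
    by_cases h : Q i
    · exact (hm_spec i h).1
    · simp [hmdef, dif_neg h]
  have hm_pos : ∀ i, Q i → 0 < m i := by
    intro i h
    obtain ⟨x, ⟨⟨hxZ, hxlev⟩, hxP⟩⟩ := (hm_spec i h).2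
    have := hPle x hxP i
    have : 0 ≤ m i := by linarith
    exact lt_of_le_of_ne this (Ne.symm (hm_ne i))
  -- key: lattice points of P are at level 0 or m i
  have hkey : ∀ i, ∀ v, v ∈ P → v ∈ intPoints d →
      dot (a i) v = b i ∨ dot (a i) v = b i + m i := by
    intro i v hvP hvZ
    rcases eq_or_ne (dot (a i) v) (b i) with h | h
    · exact Or.inl h
    · right
      have hne : dot (a i) v - b i ≠ 0 := sub_ne_zero.mpr h
      have hwit : ({x ∈ intPoints d | dot (a i) x = b i + (dot (a i) v - b i)} ∩ P).Nonempty :=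
        ⟨v, ⟨⟨hvZ, by ring⟩, hvP⟩⟩
      have hQ : Q i := ⟨dot (a i) v - b i, hne, hwit⟩
      have := htwo i (dot (a i) v - b i) (m i) hne (hm_ne i) hwit (hm_spec i hQ).2
      linarith
  -- if no nonzero level, the affine span of P lies in the hyperplane
  have haff : ∀ i, ¬ Q i → ∀ x ∈ affineSpan ℝ P, dot (a i) x = b i := by
    intro i hni x hx
    have hA0 : ∀ v ∈ (A : Set (Fin d → ℝ)), dot (a i) v = b i := by
      intro v hv
      by_contra hne
      exact hni ⟨dot (a i) v - b i, sub_ne_zero.mpr hne,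
        ⟨v, ⟨⟨hA hv, by ring⟩, hP ▸ subset_convexHull ℝ _ hv⟩⟩⟩
    have hspan : affineSpan ℝ P = affineSpan ℝ (A : Set (Fin d → ℝ)) := by
      rw [hP, affineSpan_convexHull]
    have hle : affineSpan ℝ (A : Set (Fin d → ℝ)) ≤
        AffineSubspace.comap (dotLin (a i)).toAffineMap
          (AffineSubspace.mk' (b i) (⊥ : Submodule ℝ ℝ)) := by
      rw [affineSpan_le]
      intro v hv
      show (dotLin (a i)).toAffineMap v ∈ AffineSubspace.mk' (b i) (⊥ : Submodule ℝ ℝ)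
      rw [AffineSubspace.mem_mk']
      simp [dotLin, hA0 v hv]
    rw [hspan] at hx
    have h2 : (dotLin (a i)).toAffineMap x ∈ AffineSubspace.mk' (b i) (⊥ : Submodule ℝ ℝ) :=
      hle hx
    rw [AffineSubspace.mem_mk'] at h2
    simpa [dotLin, sub_eq_zero] using h2
  -- the affine map
  let π : (Fin d → ℝ) →ᵃ[ℝ] (Fin n → ℝ) :=
    { toFun := fun x i => (dot (a i) x - b i) * (m i)⁻¹
      linear := LinearMap.pi fun i => (m i)⁻¹ • dotLin (a i)
      map_vadd' := by
        intro p v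
        funext i
        show (dot (a i) (v + p) - b i) * (m i)⁻¹ =
          (m i)⁻¹ * dot (a i) v + (dot (a i) p - b i) * (m i)⁻¹
        rw [dot_add']
        ring }
  have hπapp : ∀ x j, π x j = (dot (a j) x - b j) * (m j)⁻¹ := fun _ _ => rfl
  -- π maps lattice points of P to {0,1}
  have hzo : ∀ x ∈ P ∩ intPoints d, π x ∈ zeroOneSet n := by
    rintro x ⟨hxP, hxZ⟩ i
    rcases hkey i x hxP hxZ with h | h
    · left; rw [hπapp, h]; ring
    · right; rw [hπapp, h]
      have hb : b i + m i - b i = m i := by ring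
      rw [hb]
      exact mul_inv_cancel₀ (hm_ne i)
  -- π(P) ⊆ [0,1]^n
  have hcube_pi : stdCube n = Set.pi Set.univ (fun _ : Fin n => Set.Icc (0 : ℝ) 1) := by
    ext x; simp [stdCube, Set.mem_pi, Pi.le_def, forall_and, Set.mem_Icc]
  have hconv : Convex ℝ (stdCube n) := by
    rw [hcube_pi]; exact convex_pi fun i _ => convex_Icc 0 1
  have himg : π '' P ⊆ stdCube n := by
    rw [hP, AffineMap.image_convexHull]
    refine convexHull_min ?_ hconv
    rintro y ⟨v, hv, rfl⟩
    intro i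
    have hvz := hzo v ⟨hP ▸ subset_convexHull ℝ _ hv, hA hv⟩ i
    rcases hvz with h | h <;> rw [h] <;> norm_num
  refine ⟨π, ?_, hzo, ?_⟩
  · -- injectivity on P
    intro x hx y hy hxy
    by_contra hne
    have hdoteq : ∀ i, dot (a i) x = dot (a i) y := by
      intro i
      have := congrFun hxy i
      rw [hπapp, hπapp] at this
      have hmne := hm_ne i
      field_simp at this
      linarith
    -- the whole line through x and y is in P
    have hline : ∀ t : ℝ, x + t • (y - x) ∈ P := by
      intro t
      rw [hdesc]
      intro i
      have : dot (a i) (x + t • (y - x)) = dot (a i) x := by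
        rw [dot_add', dot_smul']
        have : dot (a i) (y - x) = dot (a i) y - dot (a i) x := by
          have := dot_add' (a i) (y - x) x
          simp at this
          linarith
        rw [this, hdoteq i]
        ring
      rw [this]
      exact hPle x hx i
    -- P is bounded, contradiction
    have hcomp : IsCompact P := hP ▸ (A.finite_toSet.isCompact_convexHull ℝ)
    obtain ⟨R, hR⟩ := isBounded_iff_forall_norm_le.mp hcomp.isBounded
    have hv0' : y - x ≠ 0 := fun h => hne (sub_eq_zero.mp h).symm
    have hv0'' : ‖y - x‖ > 0 := norm_pos_iff.mpr hv0'
    set t := (R + ‖x‖ + 1) / ‖y - x‖ with ht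
    have hxnorm : ‖x‖ ≤ R := hR x hx
    have hxnn : (0:ℝ) ≤ ‖x‖ := norm_nonneg x
    have htpos : 0 < t := by
      apply div_pos _ hv0''
      linarith
    have hp := hR _ (hline t)
    have h1 : ‖t • (y - x)‖ = t * ‖y - x‖ := by
      rw [norm_smul, Real.norm_eq_abs, abs_of_pos htpos]
    have h2 : t * ‖y - x‖ = R + ‖x‖ + 1 := by
      rw [ht, div_mul_cancel₀]
      exact ne_of_gt hv0''
    have h3 : ‖t • (y - x)‖ ≤ ‖x + t • (y - x)‖ + ‖x‖ := by
      have := norm_sub_le (x + t • (y - x)) x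
      simpa using this
    rw [h1, h2] at h3
    linarith
  · -- image equality
    apply Set.Subset.antisymm
    · rintro y ⟨x, hx, rfl⟩
      exact ⟨himg ⟨x, hx, rfl⟩, subset_affineSpan ℝ _ ⟨x, hx, rfl⟩⟩
    · rintro y ⟨hcube, hspan⟩
      have hmap : y ∈ (affineSpan ℝ P).map π := by
        rw [AffineSubspace.map_span]
        exact hspan
      obtain ⟨x, hx, rfl⟩ := AffineSubspace.mem_map.mp hmap
      refine ⟨x, ?_, rfl⟩
      rw [hdesc]
      intro i
      by_cases hQi : Q i
      · have h0 : 0 ≤ π x i := (hcube i).1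
        rw [hπapp] at h0
        have hmp := hm_pos i hQi
        have h1 := mul_nonneg h0 hmp.le
        rw [mul_assoc, inv_mul_cancel₀ (hm_ne i), mul_one] at h1
        linarith
      · have := haff i hQi x hx
        linarith
end
end

section
/- Let P ⊆ ℝ^d be the convex hull of a finite subset of ℤ^d, and suppose P = {x ∈ ℝ^d : aᵢᵀx ≥ bᵢ, i = 1,…,n} where each inequality is facet-defining, i.e. the affine span of P ∩ {x : aᵢᵀx = bᵢ} has dimension d − 1. Suppose that for each i there is at most one nonzero real number m such that {x ∈ ℤ^d : aᵢᵀx = bᵢ + m} ∩ P is nonempty. Then every point of P ∩ ℤ^d is an extreme point of P. -/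
noncomputable section

lemma dot_isLinearMap {d : ℕ} (a : Fin d → ℝ) : IsLinearMap ℝ (dot a) :=
  ⟨dot_add' a, fun c x => dot_smul' a c x⟩

/-- If a lattice polytope `P` with facet-defining linear description `aᵢᵀx ≥ bᵢ` satisfies the
two-level condition — for each `i` at most one nonzero `m` has a lattice point of `P` on the
hyperplane `aᵢᵀx = bᵢ + m` — then every lattice point of `P` is an extreme point of `P`
(i.e. it does not lie in the convex hull of `P` minus itself). -/
theorem latticePoints_extreme_of_two_level
    (d n : ℕ) (A : Finset (Fin d → ℝ)) (hA : (A : Set (Fin d → ℝ)) ⊆ intPoints d)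
    (P : Set (Fin d → ℝ)) (hP : P = convexHull ℝ (A : Set (Fin d → ℝ)))
    (a : Fin n → Fin d → ℝ) (b : Fin n → ℝ)
    (hdesc : P = {x | ∀ i, b i ≤ dot (a i) x})
    (hfacet : ∀ i,
      Module.finrank ℝ ((affineSpan ℝ (P ∩ {x | dot (a i) x = b i})).direction) = d - 1)
    (htwo : ∀ i, ∀ m m' : ℝ, m ≠ 0 → m' ≠ 0 →
      ({x ∈ intPoints d | dot (a i) x = b i + m} ∩ P).Nonempty →
      ({x ∈ intPoints d | dot (a i) x = b i + m'} ∩ P).Nonempty → m = m') :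
    ∀ p ∈ P ∩ intPoints d, p ∉ convexHull ℝ (P \ {p}) := by
  classical
  rintro p ⟨hpP, hpZ⟩ hcon
  -- P is bounded
  obtain ⟨R, hR⟩ : ∃ R : ℝ, ∀ x ∈ P, ‖x‖ ≤ R := by
    have : Bornology.IsBounded P := by
      rw [hP]; exact (A.finite_toSet.isCompact_convexHull (𝕜 := ℝ)).isBounded
    exact isBounded_iff_forall_norm_le.1 this
  -- membership in P via the inequality description
  have hmem : ∀ x ∈ P, ∀ i, b i ≤ dot (a i) x := fun x hx i => by
    rw [hdesc] at hx; exact hx i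
  -- injectivity: a point of P with the same dot products as p must be p
  have hinj : ∀ x ∈ P, (∀ i, dot (a i) x = dot (a i) p) → x = p := by
    intro x hx heq
    by_contra hne
    have hxp : x - p ≠ 0 := sub_ne_zero.2 hne
    have hnorm : (0 : ℝ) < ‖x - p‖ := norm_pos_iff.2 hxp
    set t : ℝ := (R + ‖p‖ + 1) / ‖x - p‖ with ht
    have hy : p + t • (x - p) ∈ P := by
      rw [hdesc]
      intro i
      have : dot (a i) (p + t • (x - p)) = dot (a i) p := by
        rw [dot_add', dot_smul']
        have : dot (a i) (x - p) = dot (a i) x - dot (a i) p := by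
          have := dot_add' (a i) (x - p) p
          simp at this
          linarith
        rw [this, heq i]
        ring
      rw [this]
      exact hmem p hpP i
    have h1 : ‖p + t • (x - p)‖ ≤ R := hR _ hy
    have h2 : ‖t • (x - p)‖ ≤ ‖p + t • (x - p)‖ + ‖p‖ := by
      have h := norm_sub_le (p + t • (x - p)) p
      simpa using h
    have hRnn : 0 ≤ R := le_trans (norm_nonneg p) (hR p hpP)
    have h3 : ‖t • (x - p)‖ = R + ‖p‖ + 1 := by
      have hpos : (0:ℝ) ≤ R + ‖p‖ + 1 := by positivity
      rw [norm_smul, Real.norm_eq_abs, ht, abs_div, abs_of_nonneg hpos, abs_of_pos hnorm]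
      field_simp
    nlinarith [norm_nonneg p]
  -- for non-tight constraints, p maximizes dot (a i) over P
  have hmax : ∀ i, dot (a i) p ≠ b i → ∀ x ∈ P, dot (a i) x ≤ dot (a i) p := by
    intro i hi x hx
    have hAne : A.Nonempty := by
      have : (convexHull ℝ (A : Set (Fin d → ℝ))).Nonempty := ⟨p, hP ▸ hpP⟩
      rw [convexHull_nonempty_iff] at this
      exact Finset.coe_nonempty.1 this
    obtain ⟨v, hvA, hv⟩ := A.exists_max_image (fun y => dot (a i) y) hAne
    have hvP : v ∈ P := hP ▸ subset_convexHull ℝ _ hvA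
    have hxv : dot (a i) x ≤ dot (a i) v := by
      have hsub : P ⊆ {y | dot (a i) y ≤ dot (a i) v} := by
        rw [hP]
        exact convexHull_min (fun y hy => hv y hy) (convex_halfSpace_le (dot_isLinearMap (a i)) _)
      exact hsub hx
    have hbv : b i ≤ dot (a i) v := hmem v hvP i
    by_cases hveq : dot (a i) v = b i
    · exfalso
      have hbp : b i ≤ dot (a i) p := hmem p hpP i
      have : dot (a i) p ≤ b i := hveq ▸ (by
        have hsub : P ⊆ {y | dot (a i) y ≤ dot (a i) v} := by
          rw [hP]
          exact convexHull_min (fun y hy => hv y hy) (convex_halfSpace_le (dot_isLinearMap (a i)) _)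
        exact hsub hpP)
      exact hi (le_antisymm this hbp)
    · have hmeq : dot (a i) v - b i = dot (a i) p - b i := by
        apply htwo i _ _ (sub_ne_zero.2 hveq) (sub_ne_zero.2 hi)
        · exact ⟨v, ⟨⟨hA hvA, by ring⟩, hvP⟩⟩
        · exact ⟨p, ⟨⟨hpZ, by ring⟩, hpP⟩⟩
      linarith
  -- the separating functional
  set ε : Fin n → ℝ := fun i => if dot (a i) p = b i then -1 else 1 with hε
  set g : (Fin d → ℝ) → ℝ := fun x => ∑ i, ε i * dot (a i) x with hg
  have hg_lin : IsLinearMap ℝ g := by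
    constructor
    · intro x y
      simp only [hg, dot_add', mul_add, Finset.sum_add_distrib]
    · intro c x
      simp only [hg, dot_smul', smul_eq_mul, Finset.mul_sum]
      exact Finset.sum_congr rfl fun i _ => by ring
  have hterm : ∀ x ∈ P, ∀ i, ε i * dot (a i) x ≤ ε i * dot (a i) p := by
    intro x hx i
    by_cases hi : dot (a i) p = b i
    · simp only [hε, if_pos hi]
      have := hmem x hx i
      rw [hi]
      linarith
    · simp only [hε, if_neg hi]
      have := hmax i hi x hx
      linarith
  have hterm_eq : ∀ x ∈ P, (∀ i, ε i * dot (a i) x = ε i * dot (a i) p) → x = p := by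
    intro x hx heq
    apply hinj x hx
    intro i
    have hεne : ε i ≠ 0 := by
      simp only [hε]; split <;> norm_num
    exact mul_left_cancel₀ hεne (heq i)
  have hglt : ∀ x ∈ P \ {p}, g x < g p := by
    rintro x ⟨hx, hxne⟩
    have hne : x ≠ p := hxne
    apply Finset.sum_lt_sum (fun i _ => hterm x hx i)
    by_contra h
    push_neg at h
    apply hne
    apply hterm_eq x hx
    intro i
    exact le_antisymm (hterm x hx i) (h i (Finset.mem_univ i))
  have hsub : convexHull ℝ (P \ {p}) ⊆ {x | g x < g p} :=
    convexHull_min (fun x hx => hglt x hx) (convex_halfSpace_lt hg_lin _)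
  exact lt_irrefl (g p) (hsub hcon)
end
end

section
/- Let n ≥ 3 and let C_n be the cycle graph with vertex set ℤ/n and edges e_i = {i, i+1} for i = 0,…,n−1. For S ⊆ ℤ/n define f(S) = δ_{C_n}(S)_{e_0} − Σ_{i=1}^{n−1} δ_{C_n}(S)_{e_i}. Then: (a) for every S, f(S) is an even integer and f(S) ≤ 0; and (b) for every integer j with 1 ≤ j ≤ ⌊n/2⌋ there exists S ⊆ ℤ/n with f(S) = 2 − 2j (for instance S = {2, 4, …, 2j}). (The content of Lemma 3.8 of the paper: the switched cycle inequality x_{e_0} − Σ_{i ≥ 1} x_{e_i} ≤ 0 takes many distinct even values at cut semimetrics of a cycle.) -/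
noncomputable section

open Classical in
/-- The coordinate of the cut semimetric `δ_{C_n}(S)` at the edge `e_i = {i, i+1}` of the
cycle graph `C_n` on `ℤ/n`, as an integer: `1` if exactly one of `i`, `i+1` lies in `S`,
and `0` otherwise. -/
noncomputable def cutEdge (n : ℕ) (S : Set (ZMod n)) (i : ZMod n) : ℤ :=
  if (i ∈ S ↔ (i + 1) ∈ S) then 0 else 1

/-- The switched cycle functional `f(S) = δ(S)_{e_0} − Σ_{i=1}^{n−1} δ(S)_{e_i}` evaluated
at the cut semimetric of `S ⊆ ℤ/n`. -/
noncomputable def cycF (n : ℕ) (S : Set (ZMod n)) : ℤ :=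
  cutEdge n S 0 - ∑ i ∈ Finset.Ico 1 n, cutEdge n S (i : ZMod n)

lemma cutEdge_nonneg (n : ℕ) (S : Set (ZMod n)) (i : ZMod n) : 0 ≤ cutEdge n S i := by
  unfold cutEdge; split <;> norm_num

open Classical in
lemma cutEdge_decomp (n : ℕ) (S : Set (ZMod n)) (x : ZMod n) :
    cutEdge n S x = (if x ∈ S then (1:ℤ) else 0) + (if (x+1) ∈ S then (1:ℤ) else 0)
      - 2 * (if x ∈ S ∧ (x+1) ∈ S then (1:ℤ) else 0) := by
  by_cases h1 : x ∈ S <;> by_cases h2 : (x+1) ∈ S <;> simp [cutEdge, h1, h2]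

lemma total_even (n : ℕ) [NeZero n] (S : Set (ZMod n)) :
    Even (∑ x : ZMod n, cutEdge n S x) := by
  classical
  have h1 : ∑ x : ZMod n, (if (x+1) ∈ S then (1:ℤ) else 0)
      = ∑ x : ZMod n, (if x ∈ S then (1:ℤ) else 0) :=
    Fintype.sum_equiv (Equiv.addRight 1) _ _ (fun x => rfl)
  have key : ∑ x : ZMod n, cutEdge n S x =
      2 * ((∑ x : ZMod n, (if x ∈ S then (1:ℤ) else 0))
        - ∑ x : ZMod n, (if x ∈ S ∧ (x+1) ∈ S then (1:ℤ) else 0)) := by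
    rw [Finset.sum_congr rfl fun x _ => cutEdge_decomp n S x, Finset.sum_sub_distrib,
      Finset.sum_add_distrib, h1, ← Finset.mul_sum]
    ring
  rw [key, two_mul]; exact ⟨_, rfl⟩

lemma sum_univ_eq (n : ℕ) [NeZero n] (F : ZMod n → ℤ) :
    ∑ x : ZMod n, F x = ∑ i ∈ Finset.range n, F (i : ZMod n) := by
  refine Finset.sum_nbij' (fun x : ZMod n => x.val) (fun i : ℕ => (i : ZMod n)) ?_ ?_ ?_ ?_ ?_
  · intro a _; exact Finset.mem_range.2 (ZMod.val_lt a)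
  · intro a _; exact Finset.mem_univ _
  · intro a _; exact ZMod.natCast_rightInverse a
  · intro a ha; exact ZMod.val_natCast_of_lt (Finset.mem_range.1 ha)
  · intro a _; rw [ZMod.natCast_val, ZMod.cast_id]

lemma cycF_eq (n : ℕ) [NeZero n] (S : Set (ZMod n)) :
    cycF n S = 2 * cutEdge n S 0 - ∑ x : ZMod n, cutEdge n S x := by
  have hn : 0 < n := Nat.pos_of_ne_zero (NeZero.ne n)
  rw [sum_univ_eq, Finset.range_eq_Ico, Finset.sum_eq_sum_Ico_succ_bot hn]
  unfold cycF
  push_cast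
  ring

open Classical in
lemma edge_val (n j : ℕ) (hn : 3 ≤ n) (hj : 1 ≤ j) (hjn : 2*j ≤ n) (i : ℕ) (hi : i < n) :
    cutEdge n {x : ZMod n | x.val % 2 = 1 ∧ x.val < 2*j} (i : ZMod n)
      = if i < 2*j then 1 else 0 := by
  have hv : ((i : ℕ) : ZMod n).val = i := ZMod.val_natCast_of_lt hi
  have hv2 : ((i : ZMod n) + 1).val = (i+1) % n := by
    have : ((i : ZMod n) + 1) = ((i+1 : ℕ) : ZMod n) := by push_cast; ring
    rw [this, ZMod.val_natCast]
  unfold cutEdge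
  simp only [Set.mem_setOf_eq, hv, hv2]
  rcases lt_or_ge (i+1) n with h | h
  · rw [Nat.mod_eq_of_lt h]
    split_ifs with h1 h2 h2 <;> omega
  · have he : i + 1 = n := by omega
    rw [he, Nat.mod_self]
    norm_num
    split_ifs with h1 h2 h2 <;> omega

/-- Lemma 3.8 (content): for the cycle `C_n` (`n ≥ 3`), (a) `f(S)` is even and `≤ 0` for every
`S ⊆ ℤ/n`, and (b) every even value `2 − 2j` with `1 ≤ j ≤ ⌊n/2⌋` is attained by some `S`. -/
theorem cycle_facet_values
    (n : ℕ) (hn : 3 ≤ n) [NeZero n] :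
    (∀ S : Set (ZMod n), Even (cycF n S) ∧ cycF n S ≤ 0) ∧
    (∀ j : ℕ, 1 ≤ j → j ≤ n / 2 → ∃ S : Set (ZMod n), cycF n S = 2 - 2 * (j : ℤ)) := by
  constructor
  · intro S
    classical
    have hT : Even (∑ x : ZMod n, cutEdge n S x) := total_even n S
    have heq := cycF_eq n S
    have hT1 : cutEdge n S 0 ≤ ∑ x : ZMod n, cutEdge n S x :=
      Finset.single_le_sum (fun x _ => cutEdge_nonneg n S x) (Finset.mem_univ 0)
    have hTnn : 0 ≤ ∑ x : ZMod n, cutEdge n S x :=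
      Finset.sum_nonneg fun x _ => cutEdge_nonneg n S x
    constructor
    · rw [heq]
      obtain ⟨k, hk⟩ := hT
      exact ⟨cutEdge n S 0 - k, by omega⟩
    · rw [heq]
      by_cases h0 : ((0:ZMod n) ∈ S ↔ (1 : ZMod n) ∈ S)
      · have : cutEdge n S 0 = 0 := by simp [cutEdge, h0]
        omega
      · have hc0 : cutEdge n S 0 = 1 := by simp [cutEdge, h0]
        obtain ⟨k, hk⟩ := hT
        omega
  · intro j hj hjn2
    have hjn : 2 * j ≤ n := by omega
    refine ⟨{x : ZMod n | x.val % 2 = 1 ∧ x.val < 2*j}, ?_⟩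
    unfold cycF
    have hsum : ∑ i ∈ Finset.Ico 1 n, cutEdge n {x : ZMod n | x.val % 2 = 1 ∧ x.val < 2*j} (i : ZMod n)
        = ∑ i ∈ Finset.Ico 1 n, (if i < 2*j then (1:ℤ) else 0) := by
      refine Finset.sum_congr rfl fun i hi => ?_
      exact edge_val n j hn hj hjn i (Finset.mem_Ico.1 hi).2
    have h0 : cutEdge n {x : ZMod n | x.val % 2 = 1 ∧ x.val < 2*j} ((0:ℕ) : ZMod n) = 1 := by
      have := edge_val n j hn hj hjn 0 (by omega)
      simpa [show (0:ℕ) < 2*j by omega] using this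
    rw [hsum, show ((0:ZMod n)) = ((0:ℕ) : ZMod n) by norm_num, h0]
    have hsplit : Finset.Ico 1 n = Finset.Ico 1 (2*j) ∪ Finset.Ico (2*j) n := by
      rw [Finset.Ico_union_Ico_eq_Ico (by omega) hjn]
    rw [hsplit, Finset.sum_union (by
      simp [Finset.disjoint_left, Finset.mem_Ico]; omega)]
    have hA : ∑ i ∈ Finset.Ico 1 (2*j), (if i < 2*j then (1:ℤ) else 0)
        = (2*j - 1 : ℕ) := by
      rw [Finset.sum_congr rfl (fun i hi => if_pos (Finset.mem_Ico.1 hi).2),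
        Finset.sum_const, Nat.card_Ico]
      simp
    have hB : ∑ i ∈ Finset.Ico (2*j) n, (if i < 2*j then (1:ℤ) else 0) = 0 := by
      refine Finset.sum_eq_zero fun i hi => if_neg (by
        have := (Finset.mem_Ico.1 hi).1; omega)
    rw [hA, hB]
    push_cast
    have : (1:ℤ) ≤ 2*(j:ℤ) := by exact_mod_cast Nat.one_le_iff_ne_zero.2 (by omega)
    push_cast [Nat.cast_sub (show 1 ≤ 2*j by omega)]
    ring
end
end
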